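/- For any real b < d and σ > 0, the integral over all real t of Φ((t−b)/σ)·Φ((d−t)/σ) dt equals (d−b)·Φ((d−b)/(√2·σ)) + √2·σ·φ((d−b)/(√2·σ)). -/

import Mathlib

/-!
If `X`, `Y` are independent standard normal variables, then `Φ(t) Φ(c - t) = P(X ≤ t ≤ c - Y)`,
so by Tonelli `∫ Φ(t) Φ(c - t) dt = E[(c - X - Y)⁺]`, where `X + Y ~ N(0, 2)`. For `Z ~ N(0, s²)`,
`E[(c - Z)⁺] = c Φ(c/s) + s φ(c/s)`, because `z ↦ c Φ(z/s) + s φ(z/s)` is an antiderivative of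
`(c - z) φ(z/s)/s` vanishing at `-∞`. The substitution `t = b + σu` reduces the theorem to
`c = (d - b)/σ`.
-/

open MeasureTheory Real Filter

noncomputable def phi (t : ℝ) : ℝ := Real.exp (-t^2/2) / Real.sqrt (2*Real.pi)

noncomputable def Phi (x : ℝ) : ℝ := ∫ s in Set.Iic x, phi s

open Set ProbabilityTheory
open scoped NNReal ENNReal

theorem lintegral_measure_Iic_mul_measure_Iic_sub (μ ν : Measure ℝ) [SFinite μ] [SFinite ν]
    (c : ℝ) :
    ∫⁻ t, μ (Iic t) * ν (Iic (c - t)) = ∫⁻ z, ENNReal.ofReal (c - z) ∂(μ ∗ ν) := by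
  set S : Set (ℝ × ℝ × ℝ) := {q | q.2.1 ≤ q.1 ∧ q.2.2 ≤ c - q.1}
  have hS : MeasurableSet S := by measurability
  calc ∫⁻ t, μ (Iic t) * ν (Iic (c - t))
      = ∫⁻ t, μ.prod ν (Prod.mk t ⁻¹' S) := by
        simp_rw [← Measure.prod_prod]; rfl
    _ = ∫⁻ p, volume ((fun t ↦ (t, p)) ⁻¹' S) ∂(μ.prod ν) := by
        rw [← Measure.prod_apply hS, Measure.prod_apply_symm hS]
    _ = ∫⁻ p, ENNReal.ofReal (c - (p.1 + p.2)) ∂(μ.prod ν) := by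
        refine lintegral_congr fun p ↦ ?_
        have : (fun t ↦ (t, p)) ⁻¹' S = Icc p.1 (c - p.2) := by
          ext t; simp only [S, mem_preimage, mem_ofPred_eq, mem_Icc, le_sub_iff_add_le, add_comm t]
        rw [this, Real.volume_Icc]; ring_nf
    _ = ∫⁻ z, ENNReal.ofReal (c - z) ∂(μ ∗ ν) :=
        (Measure.lintegral_conv_eq_lintegral_sum (f := fun z ↦ ENNReal.ofReal (c - z))
          (by fun_prop)).symm

theorem integral_cdf_mul_cdf_sub (μ ν : Measure ℝ) [IsProbabilityMeasure μ]
    [IsProbabilityMeasure ν] (c : ℝ) :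
    ∫ t, cdf μ t * cdf ν (c - t) = ∫ z, max (c - z) 0 ∂(μ ∗ ν) := by
  have hmeas : Measurable fun t ↦ cdf μ t * cdf ν (c - t) :=
    (cdf μ).mono.measurable.mul
      ((cdf ν).mono.measurable.comp (measurable_const.sub measurable_id))
  rw [integral_eq_lintegral_of_nonneg_ae (ae_of_all _ fun t ↦ mul_nonneg (cdf_nonneg _ _)
      (cdf_nonneg _ _)) hmeas.aestronglyMeasurable,
    integral_eq_lintegral_of_nonneg_ae (f := fun z ↦ max (c - z) 0)
      (ae_of_all _ fun z ↦ le_max_right _ _) (by fun_prop)]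
  simp_rw [ENNReal.ofReal_mul (cdf_nonneg _ _), ofReal_cdf, ENNReal.ofReal_max,
    ENNReal.ofReal_zero, max_zero]
  rw [lintegral_measure_Iic_mul_measure_Iic_sub]

theorem gaussianPDFReal_zero_mean {v : ℝ≥0} (hv : v ≠ 0) (z : ℝ) :
    gaussianPDFReal 0 v z = phi (z / √v) / √v := by
  have hv' : (0 : ℝ) < v := by positivity
  rw [gaussianPDFReal, phi, div_pow, sq_sqrt hv'.le, sqrt_mul (by positivity)]
  field_simp
  ring_nf

theorem phi_eq_gaussianPDFReal : phi = gaussianPDFReal 0 1 :=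
  funext fun z ↦ by simpa using (gaussianPDFReal_zero_mean one_ne_zero z).symm

theorem Phi_eq_cdf : Phi = cdf (gaussianReal 0 1) := by
  funext x
  rw [cdf_eq_real, measureReal_def, gaussianReal_apply_eq_integral _ one_ne_zero,
    ENNReal.toReal_ofReal (setIntegral_nonneg measurableSet_Iic fun _ _ ↦
      gaussianPDFReal_nonneg _ _ _), Phi, phi_eq_gaussianPDFReal]

theorem continuous_phi : Continuous phi := by
  unfold phi; fun_prop

theorem integrable_phi : Integrable phi :=
  phi_eq_gaussianPDFReal ▸ integrable_gaussianPDFReal 0 1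

theorem hasDerivAt_phi (x : ℝ) : HasDerivAt phi (-x * phi x) x := by
  refine ((((hasDerivAt_pow 2 x).fun_neg.div_const 2).exp).div_const √(2 * π)).congr_deriv ?_
  simp only [phi]
  push_cast
  ring

theorem tendsto_phi_atBot : Tendsto phi atBot (nhds 0) := by
  have h : Tendsto (fun t : ℝ ↦ -t ^ 2 / 2) atBot atBot := by
    have := (tendsto_neg_atTop_atBot.comp
      (tendsto_id.atBot_mul_atBot₀ tendsto_id)).atBot_div_const (zero_lt_two : (0 : ℝ) < 2)
    simpa [sq] using this
  rw [← zero_div √(2 * π)]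
  exact (tendsto_exp_atBot.comp h).div_const _

theorem hasDerivAt_Phi (x : ℝ) : HasDerivAt Phi (phi x) x := by
  have h : ∀ y, Phi y = Phi 0 + ∫ t in (0 : ℝ)..y, phi t := fun y ↦ by
    rw [Phi, Phi, ← intervalIntegral.integral_Iic_sub_Iic integrable_phi.integrableOn
      integrable_phi.integrableOn]
    ring
  rw [funext h]
  exact (intervalIntegral.integral_hasDerivAt_right integrable_phi.intervalIntegrable
    (continuous_phi.stronglyMeasurableAtFilter _ _) continuous_phi.continuousAt).const_add _

theorem tendsto_Phi_atBot : Tendsto Phi atBot (nhds 0) :=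
  Phi_eq_cdf ▸ tendsto_cdf_atBot _

theorem hasDerivAt_mul_Phi_add_mul_phi (c : ℝ) {s : ℝ} (hs : s ≠ 0) (z : ℝ) :
    HasDerivAt (fun z ↦ c * Phi (z / s) + s * phi (z / s)) ((c - z) * (phi (z / s) / s)) z := by
  have hlin : HasDerivAt (fun z ↦ z / s) (1 / s) z := by
    simpa using (hasDerivAt_id z).div_const s
  refine ((((hasDerivAt_Phi _).comp z hlin).const_mul c).add
    (((hasDerivAt_phi _).comp z hlin).const_mul s)).congr_deriv ?_
  field_simp
  ring

theorem tendsto_mul_Phi_add_mul_phi_atBot (c s : ℝ) (hs : 0 < s) :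
    Tendsto (fun z ↦ c * Phi (z / s) + s * phi (z / s)) atBot (nhds 0) := by
  have hlin : Tendsto (fun z ↦ z / s) atBot atBot := tendsto_id.atBot_div_const hs
  simpa using ((tendsto_Phi_atBot.comp hlin).const_mul c).add
    ((tendsto_phi_atBot.comp hlin).const_mul s)

theorem integrable_gaussianPDFReal_mul_sub (v : ℝ≥0) (c : ℝ) :
    Integrable fun z ↦ gaussianPDFReal 0 v z * (c - z) := by
  by_cases hv : v = 0
  · simp [hv]
  have h : Integrable (fun z ↦ c - z) (gaussianReal 0 v) :=
    (integrable_const c).sub ((memLp_id_gaussianReal 1).integrable le_rfl)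
  rw [gaussianReal_of_var_ne_zero _ hv, integrable_withDensity_iff_integrable_smul'
    (measurable_gaussianPDF _ _) (ae_of_all _ fun _ ↦ gaussianPDF_lt_top)] at h
  simpa [toReal_gaussianPDF] using h

theorem integral_max_sub_zero_gaussianReal {v : ℝ≥0} (hv : v ≠ 0) (c : ℝ) :
    ∫ z, max (c - z) 0 ∂(gaussianReal 0 v) = c * Phi (c / √v) + √v * phi (c / √v) := by
  have hs : (0 : ℝ) < √v := sqrt_pos.2 (by positivity)
  calc ∫ z, max (c - z) 0 ∂(gaussianReal 0 v)
      = ∫ z in Iic c, gaussianPDFReal 0 v z * (c - z) := by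
        rw [integral_gaussianReal_eq_integral_smul hv, ← integral_indicator measurableSet_Iic]
        congr with z
        by_cases h : z ≤ c
        · simp [h]
        · simp [h, (sub_neg.2 (not_le.1 h)).le]
    _ = c * Phi (c / √v) + √v * phi (c / √v) - 0 := by
        refine integral_Iic_of_hasDerivAt_of_tendsto' (fun z _ ↦ ?_)
          (integrable_gaussianPDFReal_mul_sub v c).integrableOn
          (tendsto_mul_Phi_add_mul_phi_atBot c _ hs)
        rw [gaussianPDFReal_zero_mean hv, mul_comm]
        exact hasDerivAt_mul_Phi_add_mul_phi c hs.ne' z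
    _ = c * Phi (c / √v) + √v * phi (c / √v) := sub_zero _

theorem integral_Phi_mul_Phi_sub (c : ℝ) :
    ∫ t, Phi t * Phi (c - t) = c * Phi (c / √2) + √2 * phi (c / √2) := by
  calc ∫ t, Phi t * Phi (c - t)
      = ∫ z, max (c - z) 0 ∂(gaussianReal 0 1 ∗ gaussianReal 0 1) := by
        rw [Phi_eq_cdf]; exact integral_cdf_mul_cdf_sub _ _ c
    _ = c * Phi (c / √2) + √2 * phi (c / √2) := by
        rw [gaussianReal_conv_gaussianReal, add_zero,
          integral_max_sub_zero_gaussianReal (by norm_num)]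
        norm_num

theorem stmt8_general (b d σ : ℝ) (hσ : 0 < σ) :
    ∫ t : ℝ, Phi ((t - b) / σ) * Phi ((d - t) / σ) =
      (d - b) * Phi ((d - b) / (Real.sqrt 2 * σ)) +
        Real.sqrt 2 * σ * phi ((d - b) / (Real.sqrt 2 * σ)) := by
  have hshift : (fun t ↦ Phi ((t - b) / σ) * Phi ((d - t) / σ)) =
      fun t ↦ Phi ((t - b) / σ) * Phi ((d - b) / σ - (t - b) / σ) := by
    funext t; rw [show (d - t) / σ = (d - b) / σ - (t - b) / σ by ring]
  rw [hshift, integral_sub_right_eq_self (fun t ↦ Phi (t / σ) * Phi ((d - b) / σ - t / σ)) b,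
    Measure.integral_comp_div (fun u ↦ Phi u * Phi ((d - b) / σ - u)), integral_Phi_mul_Phi_sub,
    abs_of_pos hσ, smul_eq_mul, div_div, mul_comm σ √2, mul_add, ← mul_assoc,
    mul_div_cancel₀ _ hσ.ne']
  ring

theorem stmt8 (b d σ : ℝ) (hbd : b < d) (hσ : 0 < σ) :
    ∫ t : ℝ, Phi ((t - b) / σ) * Phi ((d - t) / σ) =
      (d - b) * Phi ((d - b) / (Real.sqrt 2 * σ)) +
        Real.sqrt 2 * σ * phi ((d - b) / (Real.sqrt 2 * σ)) :=
  stmt8_general b d σ hσ
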